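/- In the reduction from independent set to list coloring reconfiguration: if H has an independent set of size s, then f_ini and f_tar are reconfigurable in G. -/

import Mathlib

/-- Colors for the reduction: the color `c-star`, the colors `a` and `b`, and a color
`c i p` for each selection index `i` and each vertex `u_p` of `H`. -/
inductive RCol (n s : ℕ) where
  | star : RCol n s
  | a : RCol n s
  | b : RCol n s
  | c (i : Fin s) (p : Fin n) : RCol n s
deriving DecidableEq

/-- Index data of an `(i,j;p,q)`-forbidding gadget: it is valid when `i < j` and either
`p = q` (one gadget per vertex `u_p` of `H`) or `u_p u_q` is an edge of `H`
(both orientations of each edge). -/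
def Gadget {n : ℕ} (H : SimpleGraph (Fin n)) (s : ℕ) :=
  {x : (Fin s × Fin s) × Fin n × Fin n //
    x.1.1 < x.1.2 ∧ (x.2.1 = x.2.2 ∨ H.Adj x.2.1 x.2.2)}

instance {n : ℕ} (H : SimpleGraph (Fin n)) (s : ℕ) : DecidableEq (Gadget H s) :=
  Subtype.instDecidableEq

/-- Vertices of the reduction graph: selection vertices `v_i` (`Sum.inl i`), forbidding
vertices (`Sum.inr (Sum.inl g)`), and the two vertices `w₁ = Sum.inr (Sum.inr 0)` and
`w₂ = Sum.inr (Sum.inr 1)`. -/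
abbrev RV {n : ℕ} (H : SimpleGraph (Fin n)) (s : ℕ) := Fin s ⊕ (Gadget H s ⊕ Fin 2)

/-- Base adjacency relation of the reduction graph: `w₂` is adjacent to every selection
vertex and to `w₁`; an `(i,j;p,q)`-forbidding vertex is adjacent to `v_i` and `v_j`. -/
def redRel {n : ℕ} (H : SimpleGraph (Fin n)) (s : ℕ) : RV H s → RV H s → Prop
  | Sum.inl i, Sum.inr (Sum.inr j) => j = 1
  | Sum.inr (Sum.inl g), Sum.inl i => i = g.val.1.1 ∨ i = g.val.1.2
  | Sum.inr (Sum.inr j), Sum.inr (Sum.inr j') => j = 0 ∧ j' = 1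
  | _, _ => False

/-- The reduction graph `G` constructed from the instance `(H, s)` of independent set. -/
def redGraph {n : ℕ} (H : SimpleGraph (Fin n)) (s : ℕ) : SimpleGraph (RV H s) :=
  SimpleGraph.fromRel (redRel H s)

/-- The list assignment of the reduction: `L(v_i) = {c-star, c_i^1, ..., c_i^n}`, an
`(i,j;p,q)`-forbidding vertex has list `{c_i^q, c_j^p}`, `L(w₁) = {a, b}`, and
`L(w₂) = {a, b, c-star}`. -/
def redList {n : ℕ} (H : SimpleGraph (Fin n)) (s : ℕ) : RV H s → Set (RCol n s)
  | Sum.inl i => {RCol.star} ∪ {x | ∃ p, x = RCol.c i p}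
  | Sum.inr (Sum.inl g) => {RCol.c g.val.1.1 g.val.2.2, RCol.c g.val.1.2 g.val.2.1}
  | Sum.inr (Sum.inr j) =>
      if j = 0 then {RCol.a, RCol.b} else {RCol.a, RCol.b, RCol.star}

/-- `f` is a proper list coloring of `G` with respect to the list assignment `L`. -/
def IsProperListColoring {V C : Type*} (G : SimpleGraph V) (L : V → Set C) (f : V → C) : Prop :=
  (∀ v, f v ∈ L v) ∧ ∀ u v, G.Adj u v → f u ≠ f v

/-- Two colorings are adjacent: they differ at exactly one vertex. -/
def ColAdjacent {V α : Type*} (f f' : V → α) : Prop :=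
  ∃ v, f v ≠ f' v ∧ ∀ u, u ≠ v → f u = f' u

/-- One reconfiguration step between proper `L`-colorings of `G`. -/
def ReconfStep {V α : Type*} (G : SimpleGraph V) (L : V → Set α) (f f' : V → α) : Prop :=
  IsProperListColoring G L f ∧ IsProperListColoring G L f' ∧ ColAdjacent f f'

/-- `f` and `f'` are connected by a reconfiguration sequence of proper `L`-colorings. -/
def Reconfigurable {V α : Type*} (G : SimpleGraph V) (L : V → Set α) (f f' : V → α) : Prop :=
  Relation.ReflTransGen (ReconfStep G L) f f'

section Aux

variable {n s : ℕ} {H : SimpleGraph (Fin n)}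

instance : Finite (Gadget H s) := Subtype.finite

lemma reconf_symm {V α : Type*} {G : SimpleGraph V} {L : V → Set α} {f g : V → α}
    (h : Reconfigurable G L f g) : Reconfigurable G L g f := by
  induction h with
  | refl => exact .refl
  | tail _ hstep ih =>
      obtain ⟨p1, p2, v, hne, hrest⟩ := hstep
      exact Relation.ReflTransGen.head ⟨p2, p1, v, hne.symm, fun u hu => (hrest u hu).symm⟩ ih

lemma recolor_indep {V α : Type*} [Finite V] (G : SimpleGraph V) (L : V → Set α)
    (f g : V → α) (hf : IsProperListColoring G L f)
    (h : ∀ v, f v ≠ g v → g v ∈ L v ∧ ∀ u, G.Adj u v → f u = g u ∧ f u ≠ g v) :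
    Reconfigurable G L f g ∧ IsProperListColoring G L g := by
  classical
  have : Fintype V := Fintype.ofFinite V
  generalize hn : (Finset.univ.filter fun v => f v ≠ g v).card = N
  induction N generalizing f with
  | zero =>
      have hfg : f = g := by
        funext v
        by_contra hv
        have hmem : v ∈ Finset.univ.filter fun v => f v ≠ g v := by simp [hv]
        rw [Finset.card_eq_zero.mp hn] at hmem
        exact absurd hmem (Finset.notMem_empty v)
      subst hfg; exact ⟨Relation.ReflTransGen.refl, hf⟩
  | succ N ih =>
      have hex : ∃ v, f v ≠ g v := by
        by_contra hc
        push_neg at hc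
        have : (Finset.univ.filter fun v => f v ≠ g v) = ∅ := by
          apply Finset.eq_empty_of_forall_notMem
          intro v hv; simp at hv; exact hv (hc v)
        rw [this] at hn; simp at hn
      obtain ⟨v, hv⟩ := hex
      set f' := Function.update f v (g v) with hf'def
      have hf'v : f' v = g v := Function.update_self _ _ _
      have hf'u : ∀ u, u ≠ v → f' u = f u := fun u hu => Function.update_of_ne hu _ _
      have hf' : IsProperListColoring G L f' := by
        constructor
        · intro u
          by_cases hu : u = v
          · rw [hu, hf'v]; exact (h v hv).1
          · rw [hf'u u hu]; exact hf.1 u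
        · intro u w hadj
          have huw : u ≠ w := hadj.ne
          by_cases hu : u = v
          · rw [hu, hf'v, hf'u w (hu ▸ Ne.symm huw)]
            exact fun e => ((h v hv).2 w (hu ▸ hadj).symm).2 e.symm
          · by_cases hw : w = v
            · rw [hw, hf'v, hf'u u hu]
              exact ((h v hv).2 u (hw ▸ hadj)).2
            · rw [hf'u u hu, hf'u w hw]; exact hf.2 u w hadj
      have hstep : ReconfStep G L f f' := by
        refine ⟨hf, hf', v, ?_, fun u hu => (hf'u u hu).symm⟩
        rw [hf'v]; exact hv
      have h' : ∀ w, f' w ≠ g w → g w ∈ L w ∧ ∀ u, G.Adj u w → f' u = g u ∧ f' u ≠ g w := by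
        intro w hw
        have hwv : w ≠ v := by
          intro e; subst e; exact hw hf'v
        rw [hf'u w hwv] at hw
        refine ⟨(h w hw).1, fun u hadj => ?_⟩
        by_cases hu : u = v
        · exact absurd ((h w hw).2 v (hu ▸ hadj)).1 hv
        · rw [hf'u u hu]; exact (h w hw).2 u hadj
      have hcard : (Finset.univ.filter fun w => f' w ≠ g w).card = N := by
        have : (Finset.univ.filter fun w => f' w ≠ g w)
            = (Finset.univ.filter fun w => f w ≠ g w).erase v := by
          ext w
          simp only [Finset.mem_filter, Finset.mem_erase, Finset.mem_univ, true_and]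
          constructor
          · intro hw
            have hwv : w ≠ v := by intro e; subst e; exact hw hf'v
            rw [hf'u w hwv] at hw; exact ⟨hwv, hw⟩
          · intro ⟨hwv, hw⟩; rw [hf'u w hwv]; exact hw
        rw [this, Finset.card_erase_of_mem (by simp [hv]), hn]
        omega
      obtain ⟨hr, hp⟩ := ih f' hf' h' hcard
      exact ⟨Relation.ReflTransGen.head hstep hr, hp⟩

lemma adj_gadget {u : RV H s} {g : Gadget H s}
    (h : (redGraph H s).Adj u (Sum.inr (Sum.inl g))) :
    ∃ i : Fin s, u = Sum.inl i := by
  rw [redGraph, SimpleGraph.fromRel_adj] at h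
  rcases u with i | g' | j
  · exact ⟨i, rfl⟩
  · obtain ⟨-, h | h⟩ := h <;> exact (h : False).elim
  · obtain ⟨-, h | h⟩ := h <;> exact (h : False).elim

lemma adj_sel {u : RV H s} {i : Fin s}
    (h : (redGraph H s).Adj u (Sum.inl i)) :
    u = Sum.inr (Sum.inr 1) ∨ ∃ g : Gadget H s, u = Sum.inr (Sum.inl g) := by
  rw [redGraph, SimpleGraph.fromRel_adj] at h
  rcases u with i' | g' | j
  · obtain ⟨-, h | h⟩ := h <;> exact (h : False).elim
  · exact Or.inr ⟨g', rfl⟩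
  · obtain ⟨-, h | h⟩ := h
    · exact (h : False).elim
    · exact Or.inl (congrArg _ (congrArg _ (h : j = 1)))

lemma adj_w1 {u : RV H s}
    (h : (redGraph H s).Adj u (Sum.inr (Sum.inr 0))) :
    u = Sum.inr (Sum.inr 1) := by
  rw [redGraph, SimpleGraph.fromRel_adj] at h
  rcases u with i' | g' | j
  · obtain ⟨-, h | h⟩ := h
    · have h' : (0 : Fin 2) = 1 := h
      exact absurd h' (by decide)
    · exact (h : False).elim
  · obtain ⟨-, h | h⟩ := h <;> exact (h : False).elim
  · obtain ⟨-, h | h⟩ := h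
    · exact absurd (h : j = 0 ∧ (0 : Fin 2) = 1).2 (by decide)
    · exact congrArg _ (congrArg _ (h : (0 : Fin 2) = 0 ∧ j = 1).2)

lemma adj_w2 {u : RV H s}
    (h : (redGraph H s).Adj u (Sum.inr (Sum.inr 1))) :
    u = Sum.inr (Sum.inr 0) ∨ ∃ i : Fin s, u = Sum.inl i := by
  rw [redGraph, SimpleGraph.fromRel_adj] at h
  rcases u with i' | g' | j
  · exact Or.inr ⟨i', rfl⟩
  · obtain ⟨-, h | h⟩ := h <;> exact (h : False).elim
  · obtain ⟨-, h | h⟩ := h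
    · exact Or.inl (congrArg _ (congrArg _ (h : j = 0 ∧ (1 : Fin 2) = 1).1))
    · exact absurd (h : (1 : Fin 2) = 0 ∧ j = 1).1 (by decide)

/-- The canonical color of a forbidding gadget, given the selection `e`. -/
def gchoice (e : Fin s → Fin n) (g : Gadget H s) : RCol n s :=
  if g.val.2.2 = e g.val.1.1 then RCol.c g.val.1.2 g.val.2.1 else RCol.c g.val.1.1 g.val.2.2

lemma gchoice_mem (e : Fin s → Fin n) (g : Gadget H s) :
    gchoice e g ∈ redList H s (Sum.inr (Sum.inl g)) := by
  unfold gchoice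
  split <;> simp [redList]

lemma gchoice_ne_star (e : Fin s → Fin n) (g : Gadget H s) :
    gchoice e g ≠ RCol.star := by
  unfold gchoice; split <;> simp

lemma gchoice_ne_a (e : Fin s → Fin n) (g : Gadget H s) :
    gchoice e g ≠ RCol.a := by
  unfold gchoice; split <;> simp

lemma gchoice_ne_sel {I : Finset (Fin n)} (e : Fin s → Fin n)
    (hinj : Function.Injective e) (hmem : ∀ i, e i ∈ I)
    (hind : ∀ u ∈ I, ∀ v ∈ I, u ≠ v → ¬ H.Adj u v)
    (g : Gadget H s) (i : Fin s) :
    gchoice e g ≠ RCol.c i (e i) := by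
  intro hc
  by_cases hq : g.val.2.2 = e g.val.1.1
  · rw [gchoice, if_pos hq] at hc
    obtain ⟨hi, hp⟩ : g.val.1.2 = i ∧ g.val.2.1 = e i := by
      simpa [RCol.c.injEq] using hc
    subst hi
    have hne : e g.val.1.2 ≠ e g.val.1.1 :=
      fun e' => absurd (hinj e') (ne_of_gt g.prop.1)
    rcases g.prop.2 with h' | h'
    · rw [hp, hq] at h'; exact hne h'
    · rw [hp, hq] at h'
      exact hind _ (hmem g.val.1.2) _ (hmem g.val.1.1) hne h'
  · rw [gchoice, if_neg hq] at hc
    obtain ⟨hi, hp⟩ : g.val.1.1 = i ∧ g.val.2.2 = e i := by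
      simpa [RCol.c.injEq] using hc
    subst hi
    exact hq hp

/-- Parametrized family of colorings visited during the reconfiguration. -/
def colC (e : Fin s → Fin n) (sel : Fin s → RCol n s) (w1 w2 : RCol n s) :
    RV H s → RCol n s
  | Sum.inl i => sel i
  | Sum.inr (Sum.inl g) => gchoice e g
  | Sum.inr (Sum.inr j) => if j = 0 then w1 else w2

end Aux

/-- Completeness of the reduction: if `H` has an independent set of size `s`, then the
initial and target colorings of the reduction instance are reconfigurable in the
reduction graph. -/
theorem reduction_independentSet_to_reconf {n : ℕ} (H : SimpleGraph (Fin n)) (s : ℕ)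
    (fini ftar : RV H s → RCol n s)
    (hfini : IsProperListColoring (redGraph H s) (redList H s) fini)
    (hftar : IsProperListColoring (redGraph H s) (redList H s) ftar)
    (hsel : ∀ i : Fin s, fini (Sum.inl i) = RCol.star ∧ ftar (Sum.inl i) = RCol.star)
    (hw1i : fini (Sum.inr (Sum.inr 0)) = RCol.a)
    (hw2i : fini (Sum.inr (Sum.inr 1)) = RCol.b)
    (hw1t : ftar (Sum.inr (Sum.inr 0)) = RCol.b)
    (hw2t : ftar (Sum.inr (Sum.inr 1)) = RCol.a)
    (I : Finset (Fin n)) (hcard : s ≤ I.card)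
    (hind : ∀ u ∈ I, ∀ v ∈ I, u ≠ v → ¬ H.Adj u v) :
    Reconfigurable (redGraph H s) (redList H s) fini ftar := by
  classical
  obtain ⟨e, hinj, hmem⟩ : ∃ e : Fin s → Fin n, Function.Injective e ∧ ∀ i, e i ∈ I := by
    refine ⟨fun i => ((I.orderIsoOfFin rfl) ⟨i.1, lt_of_lt_of_le i.2 hcard⟩ : Fin n), ?_, ?_⟩
    · intro a b hab
      have h3 := (I.orderIsoOfFin rfl).injective (Subtype.ext hab)
      exact Fin.ext (by simpa using congrArg Fin.val h3)
    · intro i; exact ((I.orderIsoOfFin rfl) ⟨i.1, lt_of_lt_of_le i.2 hcard⟩).2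
  have hns : ∀ (g : Gadget H s) (i : Fin s), gchoice e g ≠ RCol.c i (e i) :=
    gchoice_ne_sel e hinj hmem hind
  -- the colorings
  set selS : Fin s → RCol n s := fun _ => RCol.star with hselS
  set selM : Fin s → RCol n s := fun i => RCol.c i (e i) with hselM
  -- stage 1 : fini → all gadgets at their canonical colors
  have S1 := recolor_indep (redGraph H s) (redList H s) fini
      (colC e selS RCol.a RCol.b) hfini (by
    intro v hv
    rcases v with i | g | j
    · exact absurd ((hsel i).1) hv
    · refine ⟨gchoice_mem e g, fun u hu => ?_⟩
      obtain ⟨i, rfl⟩ := adj_gadget hu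
      refine ⟨(hsel i).1, ?_⟩
      rw [(hsel i).1]
      exact (gchoice_ne_star e g).symm
    · exfalso
      fin_cases j
      · exact hv hw1i
      · exact hv hw2i)
  -- stage 2 : recolor selection vertices to the independent set
  have S2 := recolor_indep (redGraph H s) (redList H s)
      (colC e selS RCol.a RCol.b) (colC e selM RCol.a RCol.b) S1.2 (by
    intro v hv
    rcases v with i | g | j
    · refine ⟨Or.inr ⟨e i, rfl⟩, fun u hu => ?_⟩
      rcases adj_sel hu with rfl | ⟨g, rfl⟩
      · exact ⟨rfl, fun hc => by simp [colC, hselS, hselM] at hc⟩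
      · exact ⟨rfl, hns g i⟩
    · exact absurd rfl hv
    · exact absurd rfl hv)
  -- stage 3 : w₂ from b to star
  have S3 := recolor_indep (redGraph H s) (redList H s)
      (colC e selM RCol.a RCol.b) (colC e selM RCol.a RCol.star) S2.2 (by
    intro v hv
    rcases v with i | g | j
    · exact absurd rfl hv
    · exact absurd rfl hv
    · fin_cases j
      · exact absurd rfl hv
      · refine ⟨by simp [colC, redList], fun u hu => ?_⟩
        rcases adj_w2 hu with rfl | ⟨i, rfl⟩
        · exact ⟨rfl, fun hc => by simp [colC, hselS, hselM] at hc⟩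
        · exact ⟨rfl, fun hc => by simp [colC, hselS, hselM] at hc⟩)
  -- stage 4 : w₁ from a to b
  have S4 := recolor_indep (redGraph H s) (redList H s)
      (colC e selM RCol.a RCol.star) (colC e selM RCol.b RCol.star) S3.2 (by
    intro v hv
    rcases v with i | g | j
    · exact absurd rfl hv
    · exact absurd rfl hv
    · fin_cases j
      · refine ⟨by simp [colC, redList], fun u hu => ?_⟩
        obtain rfl := adj_w1 hu
        exact ⟨rfl, fun hc => by simp [colC, hselS, hselM] at hc⟩
      · exact absurd rfl hv)
  -- stage 5 : w₂ from star to a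
  have S5 := recolor_indep (redGraph H s) (redList H s)
      (colC e selM RCol.b RCol.star) (colC e selM RCol.b RCol.a) S4.2 (by
    intro v hv
    rcases v with i | g | j
    · exact absurd rfl hv
    · exact absurd rfl hv
    · fin_cases j
      · exact absurd rfl hv
      · refine ⟨by simp [colC, redList], fun u hu => ?_⟩
        rcases adj_w2 hu with rfl | ⟨i, rfl⟩
        · exact ⟨rfl, fun hc => by simp [colC, hselS, hselM] at hc⟩
        · exact ⟨rfl, fun hc => by simp [colC, hselS, hselM] at hc⟩)
  -- stage 6 : selection vertices back to star
  have S6 := recolor_indep (redGraph H s) (redList H s)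
      (colC e selM RCol.b RCol.a) (colC e selS RCol.b RCol.a) S5.2 (by
    intro v hv
    rcases v with i | g | j
    · refine ⟨Or.inl rfl, fun u hu => ?_⟩
      rcases adj_sel hu with rfl | ⟨g, rfl⟩
      · exact ⟨rfl, fun hc => by simp [colC, hselS, hselM] at hc⟩
      · exact ⟨rfl, gchoice_ne_star e g⟩
    · exact absurd rfl hv
    · exact absurd rfl hv)
  -- stage t : ftar → gadgets at canonical colors (to be reversed)
  have St := recolor_indep (redGraph H s) (redList H s) ftar
      (colC e selS RCol.b RCol.a) hftar (by
    intro v hv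
    rcases v with i | g | j
    · exact absurd ((hsel i).2) hv
    · refine ⟨gchoice_mem e g, fun u hu => ?_⟩
      obtain ⟨i, rfl⟩ := adj_gadget hu
      refine ⟨(hsel i).2, ?_⟩
      rw [(hsel i).2]
      exact (gchoice_ne_star e g).symm
    · exfalso
      fin_cases j
      · exact hv hw1t
      · exact hv hw2t)
  exact (((((S1.1.trans S2.1).trans S3.1).trans S4.1).trans S5.1).trans S6.1).trans
    (reconf_symm St.1)
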